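/- arXiv:2203.15861 — 5 statements merged into one kernel-verified Lean document; each statement's English description precedes it below -/
import Mathlib

section
/- Every K-analytic function f : D → K with f(D) ⊆ H is locally constant on D. (In particular, every such f is constant on some neighbourhood of each point of D.) -/
/- CONTEXT: Let `𝔽` be a finite field of order `q` and `K = 𝔽((X))` the field of formal
Laurent series over `𝔽`, equipped with the X-adic absolute value
`|∑_{j≥j₀} c_j X^j| = q^{-j₀}` (where `c_{j₀} ≠ 0`).  Here we realize `K` as
`LaurentSeries 𝔽`, whose topology (coming from its valuation) is the one defined by this
absolute value; the absolute value itself is the function `vabs` below, since `z.order` is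
the smallest exponent occurring in `z`.  `D := {z : |z| < 1}` is the open unit disk and
`H := {∑_{k=0}^∞ a_k X^{2^k} : (a_k) ∈ 𝔽^ℕ}`, i.e. the set of Laurent series supported on
the powers `2^k`.  A map is K-analytic on `D` if it is locally given by pointwise
convergent power series. -/

noncomputable section

open Filter Topology

variable (𝔽 : Type) [Field 𝔽] [Fintype 𝔽]

open Classical in
/-- The X-adic absolute value on `𝔽((X))`, with `|X| = q⁻¹` where `q = #𝔽`. -/
def vabs (z : LaurentSeries 𝔽) : ℝ :=
  if z = 0 then 0 else (Fintype.card 𝔽 : ℝ) ^ (-z.order)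

/-- `H = {∑_{k=0}^∞ a_k X^{2^k} : (a_k) ∈ 𝔽^ℕ}`: the Laurent series whose support is
contained in `{2^k : k ∈ ℕ}`. -/
def Hset : Set (LaurentSeries 𝔽) :=
  {z | ∀ j : ℤ, z.coeff j ≠ 0 → ∃ k : ℕ, j = 2 ^ k}

/-- `f` is `K`-analytic on the open unit disk `D = {z : |z| < 1}`:  around every point of
`D` it is given by a pointwise convergent power series. -/
def AnalyticOnD (f : LaurentSeries 𝔽 → LaurentSeries 𝔽) : Prop :=
  ∀ z₀ : LaurentSeries 𝔽, vabs 𝔽 z₀ < 1 →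
    ∃ (a : ℕ → LaurentSeries 𝔽) (t : Set (LaurentSeries 𝔽)), IsOpen t ∧ z₀ ∈ t ∧
      ∀ z ∈ t, vabs 𝔽 z < 1 →
        Tendsto (fun N => ∑ k ∈ Finset.range N, a k * (z - z₀) ^ k) atTop (𝓝 (f z))

section Helpers

open Multiplicative

variable {F : Type} [Field F] [Fintype F]

/-- Discreteness of the value group: `x < ofAdd e` forces `x ≤ ofAdd e'` whenever
`e ≤ e' + 1`. -/
private lemma le_coe_of_lt_coe {x : WithZero (Multiplicative ℤ)} {e e' : ℤ}
    (he : e ≤ e' + 1) (h : x < ((ofAdd e : Multiplicative ℤ) : WithZero (Multiplicative ℤ))) :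
    x ≤ ((ofAdd e' : Multiplicative ℤ) : WithZero (Multiplicative ℤ)) := by
  rcases eq_or_ne x 0 with rfl | hx
  · exact zero_le'
  · obtain ⟨w, rfl⟩ := WithZero.ne_zero_iff_exists.mp hx
    rw [WithZero.coe_lt_coe, ← ofAdd_toAdd w, Multiplicative.ofAdd_lt] at h
    rw [WithZero.coe_le_coe, ← ofAdd_toAdd w, Multiplicative.ofAdd_le]
    omega

/-- Coefficients of a convergent sequence of Laurent series eventually agree with those of
the limit. -/
private lemma coeff_tendsto {u : ℕ → LaurentSeries F} {L : LaurentSeries F}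
    (h : Tendsto u atTop (𝓝 L)) (j : ℤ) :
    ∀ᶠ N in atTop, (u N).coeff j = L.coeff j := by
  set γ : (WithZero (Multiplicative ℤ))ˣ :=
    Units.mk0 ((ofAdd (-(j + 1)) : Multiplicative ℤ) : WithZero (Multiplicative ℤ))
      WithZero.coe_ne_zero with hγ
  have hball : {y : LaurentSeries F |
      Valued.v (y - L) < (γ : WithZero (Multiplicative ℤ))} ∈ 𝓝 L :=
    Valued.mem_nhds.mpr ⟨Units.mk0 (Valued.v.restrict
      (HahnSeries.single (j + 1) (1 : F) : LaurentSeries F))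
      ((Valued.v.restrict_pos_iff _).mpr
        (by rw [LaurentSeries.valuation_single_zpow]; exact WithZero.exp_pos)).ne',
      fun y hy => by
        have hy' : Valued.v (y - L)
            < Valued.v (HahnSeries.single (j + 1) (1 : F) : LaurentSeries F) :=
          Valued.v.restrict_lt_iff.mp (by simpa using hy)
        rw [LaurentSeries.valuation_single_zpow] at hy'
        exact hy'⟩
  filter_upwards [h hball] with N hN
  simp only [Set.mem_setOf_eq, hγ, Units.val_mk0] at hN
  exact LaurentSeries.eq_coeff_of_valuation_sub_lt F (le_of_lt hN) (lt_add_one j)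

/-- `vabs z < 1` iff all coefficients of `z` in degrees `≤ 0` vanish. -/
private lemma vabs_lt_one_iff {z : LaurentSeries F} :
    vabs F z < 1 ↔ ∀ j : ℤ, j ≤ 0 → z.coeff j = 0 := by
  have hq : (1 : ℝ) < (Fintype.card F : ℝ) := by exact_mod_cast Fintype.one_lt_card
  unfold vabs
  split_ifs with h
  · subst h
    simp
  · rw [show (1 : ℝ) = (Fintype.card F : ℝ) ^ (0 : ℤ) from (zpow_zero _).symm,
      zpow_lt_zpow_iff_right₀ hq, neg_lt, neg_zero]
    constructor
    · intro h0 j hj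
      exact HahnSeries.coeff_eq_zero_of_lt_order (lt_of_le_of_lt hj h0)
    · intro hc
      by_contra hle
      push_neg at hle
      exact (HahnSeries.coeff_order_eq_zero.not.mpr h) (hc _ hle)

/-- If a sequence is eventually equal to `c` and converges to `L`, then `L = c`. -/
private lemma eq_of_tendsto_const {u : ℕ → LaurentSeries F} {L c : LaurentSeries F}
    (h : Tendsto u atTop (𝓝 L)) (hc : ∀ᶠ N in atTop, u N = c) : L = c := by
  ext j
  obtain ⟨N, h1, h2⟩ := ((coeff_tendsto h j).and hc).exists
  rw [← h1, h2]

private lemma sum_eq_of_tail_zero {a : ℕ → LaurentSeries F} (ha : ∀ k, k ≠ 0 → a k = 0)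
    (w : LaurentSeries F) {N : ℕ} (hN : 1 ≤ N) :
    ∑ k ∈ Finset.range N, a k * w ^ k = a 0 := by
  rw [Finset.sum_eq_single_of_mem 0 (Finset.mem_range.mpr hN)
    (fun k _ hk => by rw [ha k hk, zero_mul])]
  simp

private lemma sum_zero_pow (a : ℕ → LaurentSeries F) {N : ℕ} (hN : 1 ≤ N) :
    ∑ k ∈ Finset.range N, a k * (0 : LaurentSeries F) ^ k = a 0 := by
  rw [Finset.sum_eq_single_of_mem 0 (Finset.mem_range.mpr hN)
    (fun k _ hk => by rw [zero_pow hk, mul_zero])]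
  simp

end Helpers

open Multiplicative in
/-- every `K`-analytic function `f : D → K` with `f(D) ⊆ H` is locally
constant on `D`. -/
theorem analytic_map_into_H_locally_constant
    (f : LaurentSeries 𝔽 → LaurentSeries 𝔽)
    (hf : AnalyticOnD 𝔽 f)
    (hfH : ∀ z : LaurentSeries 𝔽, vabs 𝔽 z < 1 → f z ∈ Hset 𝔽) :
    ∀ z₀ : LaurentSeries 𝔽, vabs 𝔽 z₀ < 1 →
      ∃ t : Set (LaurentSeries 𝔽), IsOpen t ∧ z₀ ∈ t ∧
        ∀ z ∈ t, vabs 𝔽 z < 1 → f z = f z₀ := by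
  intro z₀ hz₀
  obtain ⟨a, t, ht_open, hz₀t, hconv⟩ := hf z₀ hz₀
  have hconv₀ := hconv z₀ hz₀t hz₀
  rw [sub_self] at hconv₀
  have hfz₀ : f z₀ = a 0 :=
    eq_of_tendsto_const hconv₀ (eventually_atTop.mpr ⟨1, fun _ hN => sum_zero_pow a hN⟩)
  by_cases hall : ∀ k : ℕ, k ≠ 0 → a k = 0
  · refine ⟨t, ht_open, hz₀t, fun z hz hz1 => ?_⟩
    have hfz : f z = a 0 :=
      eq_of_tendsto_const (hconv z hz hz1)
        (eventually_atTop.mpr ⟨1, fun _ hN => sum_eq_of_tail_zero hall _ hN⟩)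
    rw [hfz, hfz₀]
  · exfalso
    push_neg at hall
    obtain ⟨k₁, hk₁0, hk₁⟩ := hall
    classical
    have hex : ∃ k, k ≠ 0 ∧ a k ≠ 0 := ⟨k₁, hk₁0, hk₁⟩
    set m := Nat.find hex with hm_def
    obtain ⟨hm0, ham⟩ := Nat.find_spec hex
    have hmin : ∀ k, k < m → k ≠ 0 → a k = 0 := fun k hk h0 => by
      by_contra hak
      exact Nat.find_min hex hk ⟨h0, hak⟩
    -- a ball around `z₀` inside `t`
    obtain ⟨γ, hγ⟩ := Valued.mem_nhds.mp (ht_open.mem_nhds hz₀t)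
    obtain ⟨wγ, hwγ⟩ := WithZero.ne_zero_iff_exists.mp
      (show MonoidWithZeroHom.ValueGroup₀.embedding γ.1 ≠ 0 from fun h =>
        γ.ne_zero (MonoidWithZeroHom.ValueGroup₀.embedding_injective (h.trans (map_zero _).symm)))
    set d : ℤ := Multiplicative.toAdd wγ with hd_def
    have h_mem : ∀ n : ℕ, -d < (n : ℤ) → z₀ + HahnSeries.single (n : ℤ) (1 : 𝔽) ∈ t := by
      intro n hn
      apply hγ
      show Valued.v.restrict (z₀ + HahnSeries.single (n : ℤ) (1 : 𝔽) - z₀)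
        < γ.1
      rw [Valuation.restrict_lt_iff_lt_embedding, add_sub_cancel_left,
        LaurentSeries.valuation_single_zpow, ← hwγ, WithZero.exp,
        WithZero.coe_lt_coe, ← ofAdd_toAdd wγ, ← hd_def, Multiplicative.ofAdd_lt]
      omega
    have h_D : ∀ n : ℕ, 1 ≤ n → vabs 𝔽 (z₀ + HahnSeries.single (n : ℤ) (1 : 𝔽)) < 1 := by
      intro n hn
      rw [vabs_lt_one_iff]
      intro j hj
      rw [HahnSeries.coeff_add, vabs_lt_one_iff.mp hz₀ j hj,
        HahnSeries.coeff_single_of_ne (by omega : j ≠ (n : ℤ)), add_zero]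
    have hconvn : ∀ n : ℕ, -d < (n : ℤ) → 1 ≤ n →
        Tendsto (fun N => ∑ k ∈ Finset.range N, a k * (HahnSeries.single (n : ℤ) (1 : 𝔽)) ^ k)
          atTop (𝓝 (f (z₀ + HahnSeries.single (n : ℤ) (1 : 𝔽)))) := by
      intro n h1 h2
      have := hconv _ (h_mem n h1) (h_D n h2)
      rwa [add_sub_cancel_left] at this
    -- growth bound on the coefficients from convergence at one point
    set n₀ : ℕ := max 1 ((-d).toNat + 1) with hn₀_def
    have hn₀1 : 1 ≤ n₀ := le_max_left _ _
    have hn₀d : -d < (n₀ : ℤ) := by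
      have h1 : (-d).toNat + 1 ≤ n₀ := le_max_right _ _
      have h2 : -d ≤ ((-d).toNat : ℤ) := Int.self_le_toNat _
      omega
    have hS₀ := hconvn n₀ hn₀d hn₀1
    have hterm : Tendsto (fun N => a N * (HahnSeries.single (n₀ : ℤ) (1 : 𝔽)) ^ N) atTop
        (𝓝 (f (z₀ + HahnSeries.single (n₀ : ℤ) (1 : 𝔽))
          - f (z₀ + HahnSeries.single (n₀ : ℤ) (1 : 𝔽)))) := by
      have h1 := (hS₀.comp (tendsto_add_atTop_nat 1)).sub hS₀
      have heq : (fun N => a N * (HahnSeries.single (n₀ : ℤ) (1 : 𝔽)) ^ N)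
          = fun N => (∑ k ∈ Finset.range (N + 1),
              a k * (HahnSeries.single (n₀ : ℤ) (1 : 𝔽)) ^ k)
            - ∑ k ∈ Finset.range N, a k * (HahnSeries.single (n₀ : ℤ) (1 : 𝔽)) ^ k := by
        funext N
        rw [Finset.sum_range_succ, add_sub_cancel_left]
      rw [heq]
      exact h1
    rw [sub_self] at hterm
    have hsmall : ∀ᶠ N in atTop,
        Valued.v (a N * (HahnSeries.single (n₀ : ℤ) (1 : 𝔽)) ^ N)
          < (1 : WithZero (Multiplicative ℤ)) := by
      have hb : {x : LaurentSeries 𝔽 |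
          Valued.v x < ((1 : (WithZero (Multiplicative ℤ))ˣ) : WithZero (Multiplicative ℤ))}
            ∈ 𝓝 (0 : LaurentSeries 𝔽) :=
        Valued.mem_nhds_zero.mpr ⟨1, fun x hx => by simpa using hx⟩
      filter_upwards [hterm hb] with N hN
      simpa using hN
    have horder : ∀ᶠ N in atTop, a N ≠ 0 → 0 < (a N).order + (n₀ : ℤ) * N := by
      filter_upwards [hsmall] with N hN haN
      by_contra hle
      push_neg at hle
      have hco : (a N * (HahnSeries.single (n₀ : ℤ) (1 : 𝔽)) ^ N).coeff
          ((a N).order + (n₀ : ℤ) * N) ≠ 0 := by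
        rw [HahnSeries.single_pow, one_pow,
          show (N • ((n₀ : ℕ) : ℤ)) = (n₀ : ℤ) * N by push_cast [nsmul_eq_mul]; ring,
          HahnSeries.coeff_mul_single_add, mul_one]
        exact HahnSeries.coeff_order_eq_zero.not.mpr haN
      have hN' : Valued.v (a N * (HahnSeries.single (n₀ : ℤ) (1 : 𝔽)) ^ N)
          < ((ofAdd (0 : ℤ) : Multiplicative ℤ) : WithZero (Multiplicative ℤ)) := by
        rwa [ofAdd_zero, WithZero.coe_one]
      have hle1 := le_coe_of_lt_coe (by omega : (0 : ℤ) ≤ -1 + 1) hN'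
      have := (LaurentSeries.valuation_le_iff_coeff_lt_eq_zero 𝔽
        (D := 1)).mp (by exact_mod_cast hle1) ((a N).order + (n₀ : ℤ) * N) (by omega)
      exact hco this
    obtain ⟨k₀, hk₀⟩ := eventually_atTop.mp horder
    set c : ℤ := min 0 ((Finset.range (k₀ + 1)).inf'
      (Finset.nonempty_range_iff.mpr (Nat.succ_ne_zero _))
      (fun k => (a k).order + (n₀ : ℤ) * k)) with hc_def
    have hc : ∀ k : ℕ, a k ≠ 0 → c ≤ (a k).order + (n₀ : ℤ) * k := by
      intro k hk
      rcases le_or_gt k₀ k with h | h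
      · have h1 := hk₀ k h hk
        have h0 : c ≤ 0 := min_le_left _ _
        omega
      · exact le_trans (min_le_right _ _)
          (Finset.inf'_le _ (Finset.mem_range.mpr (by omega)))
    set o : ℤ := (a m).order with ho_def
    -- the key computation: at suitable points the value of `f` has a forced nonvanishing
    -- coefficient in degree `o + m * n`, which must be a power of `2`
    have key : ∀ n : ℕ, -d < (n : ℤ) → n₀ ≤ n → o - c + (n₀ : ℤ) * (m + 1) < (n : ℤ) →
        ∃ KK : ℕ, o + (m : ℤ) * n = 2 ^ KK := by
      intro n hnd hn₀n hbig
      have hn1 : 1 ≤ n := le_trans hn₀1 hn₀n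
      set j : ℤ := o + (m : ℤ) * n with hj_def
      have hcv := hconvn n hnd hn1
      obtain ⟨N, hNc, hNm⟩ := ((coeff_tendsto hcv j).and (eventually_ge_atTop (m + 1))).exists
      have hsum : (∑ k ∈ Finset.range N,
          a k * (HahnSeries.single (n : ℤ) (1 : 𝔽)) ^ k).coeff j
          = (a 0).coeff j + (a m).coeff o := by
        rw [show ((∑ k ∈ Finset.range N,
            a k * (HahnSeries.single (n : ℤ) (1 : 𝔽)) ^ k).coeff j)
            = ∑ k ∈ Finset.range N,
              (a k * (HahnSeries.single (n : ℤ) (1 : 𝔽)) ^ k).coeff j from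
          map_sum (HahnSeries.coeff.addMonoidHom j) _ _]
        have hterm : ∀ k ∈ Finset.range N,
            (a k * (HahnSeries.single (n : ℤ) (1 : 𝔽)) ^ k).coeff j
            = (if k = 0 then (a 0).coeff j else 0) + (if k = m then (a m).coeff o else 0) := by
          intro k _
          have hcoeff : (a k * (HahnSeries.single (n : ℤ) (1 : 𝔽)) ^ k).coeff j
              = (a k).coeff (j - (k : ℤ) * n) := by
            rw [HahnSeries.single_pow, one_pow,
              show (k • ((n : ℕ) : ℤ)) = (k : ℤ) * n by push_cast [nsmul_eq_mul]; ring,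
              show j = (j - (k : ℤ) * n) + (k : ℤ) * n by ring,
              HahnSeries.coeff_mul_single_add, mul_one]
            ring_nf
          rw [hcoeff]
          rcases eq_or_ne k 0 with rfl | hk0
          · simp [(show 0 ≠ m from Ne.symm hm0), hj_def]
          · rcases eq_or_ne k m with rfl | hkm
            · have hkn : j - (m : ℤ) * n = o := by rw [hj_def]; ring
              simp [hk0, hkn]
            · rcases lt_or_gt_of_ne hkm with hlt | hgt
              · rw [hmin k hlt hk0]
                simp [hk0, hkm]
              · rcases eq_or_ne (a k) 0 with h0 | h0
                · rw [h0]
                  simp [hk0, hkm]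
                · have hck := hc k h0
                  have hidx : j - (k : ℤ) * n < (a k).order := by
                    have hk1 : (m : ℤ) + 1 ≤ (k : ℤ) := by exact_mod_cast hgt
                    have hnn₀ : (n₀ : ℤ) ≤ (n : ℤ) := by exact_mod_cast hn₀n
                    have hprod : (0 : ℤ) ≤ ((k : ℤ) - ((m : ℤ) + 1)) * ((n : ℤ) - n₀) :=
                      mul_nonneg (by linarith) (by linarith)
                    rw [hj_def]
                    nlinarith [hprod]
                  rw [HahnSeries.coeff_eq_zero_of_lt_order hidx]
                  simp [hk0, hkm]
        rw [Finset.sum_congr rfl hterm, Finset.sum_add_distrib,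
          Finset.sum_ite_eq' (Finset.range N) 0 (fun _ => (a 0).coeff j),
          Finset.sum_ite_eq' (Finset.range N) m (fun _ => (a m).coeff o),
          if_pos (Finset.mem_range.mpr (by omega)), if_pos (Finset.mem_range.mpr (by omega))]
      have hcoefffzn : (f (z₀ + HahnSeries.single (n : ℤ) (1 : 𝔽))).coeff j
          = (a 0).coeff j + (a m).coeff o := by rw [← hNc, hsum]
      have hBne : (a m).coeff o ≠ 0 := HahnSeries.coeff_order_eq_zero.not.mpr ham
      rcases eq_or_ne ((f (z₀ + HahnSeries.single (n : ℤ) (1 : 𝔽))).coeff j) 0 with h0 | h0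
      · have hA : (f z₀).coeff j ≠ 0 := by
          rw [hfz₀]
          intro hA
          rw [h0, hA, zero_add] at hcoefffzn
          exact hBne hcoefffzn.symm
        exact hfH z₀ hz₀ j hA
      · exact hfH _ (h_D n hn1) j h0
    -- choose `n` large enough and apply `key` at `n` and `n + 1`
    set M : ℤ := max ((n₀ : ℤ)) (max (-d + 1)
      (max (o - c + (n₀ : ℤ) * (m + 1) + 1) ((m : ℤ) - o + 1))) with hM_def
    have hA1 : (n₀ : ℤ) ≤ M := le_max_left _ _
    have hA2 : -d + 1 ≤ M := le_trans (le_max_left _ _) (le_max_right _ _)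
    have hA3 : o - c + (n₀ : ℤ) * (m + 1) + 1 ≤ M :=
      le_trans (le_trans (le_max_left _ _) (le_max_right _ _)) (le_max_right _ _)
    have hA4 : (m : ℤ) - o + 1 ≤ M :=
      le_trans (le_trans (le_max_right _ _) (le_max_right _ _)) (le_max_right _ _)
    have hM0 : 0 ≤ M := le_trans (by positivity) hA1
    set n : ℕ := M.toNat with hn_def
    have hnM : (n : ℤ) = M := Int.toNat_of_nonneg hM0
    obtain ⟨K1, hK1⟩ := key n (by omega) (by omega) (by omega)
    obtain ⟨K2, hK2⟩ := key (n + 1) (by push_cast; omega) (by omega) (by push_cast; omega)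
    have hm1 : 1 ≤ (m : ℤ) := by exact_mod_cast Nat.one_le_iff_ne_zero.mpr hm0
    have hK2' : (2 : ℤ) ^ K2 = 2 ^ K1 + m := by
      push_cast at hK2
      linarith [hK1, hK2]
    have hKlt : K1 < K2 := by
      have h2 : (2 : ℤ) ^ K1 < 2 ^ K2 := by linarith
      exact (pow_lt_pow_iff_right₀ (by norm_num : (1 : ℤ) < 2)).mp h2
    have h2le : (2 : ℤ) ^ (K1 + 1) ≤ 2 ^ K2 :=
      pow_le_pow_right₀ (by norm_num) hKlt
    have hpow : (2 : ℤ) ^ (K1 + 1) = 2 ^ K1 * 2 := pow_succ 2 K1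
    have hjm : (m : ℤ) < o + (m : ℤ) * n := by
      have hn1 : (m : ℤ) - o + 1 ≤ (n : ℤ) := by omega
      nlinarith [hn1, hm1]
    linarith [hK1, hK2', h2le, hpow, hjm]
end
end

section
/- The set H is a subgroup of the additive group (K, +) which is compact, closed in K, not discrete, and has empty interior in K (in particular H is not open). -/
/- CONTEXT: `𝔽` a finite field of order `q`, `K = 𝔽((X))` (realized as `LaurentSeries 𝔽`)
with the topology defined by the X-adic absolute value, i.e. its valuation topology.
`H := {∑_{k=0}^∞ a_k X^{2^k} : (a_k) ∈ 𝔽^ℕ}`: the Laurent series supported on the set of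
powers `2^k`. -/

noncomputable section

variable (𝔽 : Type) [Field 𝔽] [Fintype 𝔽]

open Multiplicative LaurentSeries

lemma pow2_injZ : Function.Injective (fun k : ℕ => (2 : ℤ) ^ k) :=
  pow_right_injective₀ (by norm_num) (by norm_num)

open Classical in
def hcoeff (f : ℕ → 𝔽) : ℤ → 𝔽 :=
  fun j => if h : ∃ k : ℕ, j = 2 ^ k then f h.choose else 0

open Classical in
lemma hcoeff_bdd (f : ℕ → 𝔽) : BddBelow (Function.support (hcoeff 𝔽 f)) := by
  apply HahnSeries.forallLTEqZero_supp_BddBelow _ (0 : ℤ)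
  intro m hm
  rw [hcoeff, dif_neg]
  rintro ⟨k, rfl⟩
  exact absurd hm (not_lt.mpr (by positivity))

def phi (f : ℕ → 𝔽) : LaurentSeries 𝔽 :=
  HahnSeries.ofSuppBddBelow (hcoeff 𝔽 f) (hcoeff_bdd 𝔽 f)

open Classical in
lemma phi_coeff (f : ℕ → 𝔽) (j : ℤ) :
    (phi 𝔽 f).coeff j = if h : ∃ k : ℕ, j = 2 ^ k then f h.choose else 0 := rfl

lemma phi_coeff_pow (f : ℕ → 𝔽) (k : ℕ) : (phi 𝔽 f).coeff ((2 : ℤ) ^ k) = f k := by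
  have h : ∃ k' : ℕ, ((2 : ℤ) ^ k) = 2 ^ k' := ⟨k, rfl⟩
  rw [phi_coeff, dif_pos h]
  congr 1
  exact pow2_injZ h.choose_spec.symm

lemma phi_coeff_not_pow (f : ℕ → 𝔽) (j : ℤ) (h : ¬∃ k : ℕ, j = 2 ^ k) :
    (phi 𝔽 f).coeff j = 0 := by rw [phi_coeff, dif_neg h]

lemma phi_range : Set.range (phi 𝔽) = Hset 𝔽 := by
  ext z
  constructor
  · rintro ⟨f, rfl⟩ j hj
    by_contra h
    exact hj (phi_coeff_not_pow 𝔽 f j h)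
  · intro hz
    refine ⟨fun k => z.coeff ((2 : ℤ) ^ k), ?_⟩
    ext j
    by_cases h : ∃ k : ℕ, j = 2 ^ k
    · obtain ⟨k, rfl⟩ := h
      rw [phi_coeff_pow]
    · rw [phi_coeff_not_pow 𝔽 _ j h]
      by_contra hc
      exact h (hz j fun h0 => hc h0.symm)

lemma mem_nhds_old {s : Set (LaurentSeries 𝔽)} {x : LaurentSeries 𝔽} (hs : s ∈ nhds x) :
    ∃ γ : (WithZero (Multiplicative ℤ))ˣ, {y | Valued.v (y - x) < (γ : (WithZero (Multiplicative ℤ)))} ⊆ s := by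
  obtain ⟨γ, hγ⟩ := Valued.mem_nhds.mp hs
  refine ⟨Units.map (MonoidWithZeroHom.ValueGroup₀.embedding).toMonoidHom γ, fun y hy => hγ ?_⟩
  rw [Set.mem_setOf_eq, Valuation.restrict_lt_iff_lt_embedding]
  exact hy

lemma phi_continuous [TopologicalSpace 𝔽] [DiscreteTopology 𝔽] :
    Continuous (phi 𝔽 : (ℕ → 𝔽) → LaurentSeries 𝔽) := by
  rw [continuous_iff_continuousAt]
  intro f s hs
  replace hs := mem_nhds_old 𝔽 hs
  obtain ⟨γ, hγ⟩ := hs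
  obtain ⟨a, ha⟩ := WithZero.ne_zero_iff_exists.mp γ.ne_zero
  set n : ℕ := (toAdd a).natAbs with hn
  have hlt : ((ofAdd (-((2 : ℤ) ^ n)) : Multiplicative ℤ) : (WithZero (Multiplicative ℤ))) < γ := by
    rw [← ha, WithZero.coe_lt_coe, ← ofAdd_toAdd a, Multiplicative.ofAdd_lt]
    have h1 : ((n : ℤ)) < 2 ^ n := by exact_mod_cast (Nat.lt_two_pow_self (n := n))
    have h2 : -((n : ℤ)) ≤ toAdd a := by rw [hn]; omega
    linarith
  have hU : {g : ℕ → 𝔽 | ∀ k < n, g k = f k} ∈ nhds f := by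
    have heq : {g : ℕ → 𝔽 | ∀ k < n, g k = f k}
        = ⋂ k ∈ Finset.range n, (fun g : ℕ → 𝔽 => g k) ⁻¹' {f k} := by
      ext g; simp [Finset.mem_range]
    have : IsOpen {g : ℕ → 𝔽 | ∀ k < n, g k = f k} := by
      rw [heq]
      exact isOpen_biInter_finset fun k _ =>
        (continuous_apply k).isOpen_preimage _ (isOpen_discrete _)
    exact this.mem_nhds (fun k _ => rfl)
  apply Filter.mem_of_superset hU
  intro g hg
  apply hγ
  show Valued.v (phi 𝔽 g - phi 𝔽 f) < (γ : (WithZero (Multiplicative ℤ)))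
  refine lt_of_le_of_lt ?_ hlt
  rw [show ((ofAdd (-((2:ℤ)^n)) : Multiplicative ℤ) : WithZero (Multiplicative ℤ))
    = WithZero.exp (-((2:ℤ)^n)) from rfl]
  rw [valuation_le_iff_coeff_lt_eq_zero]
  intro i hi
  rw [HahnSeries.coeff_sub]
  by_cases h : ∃ k : ℕ, i = 2 ^ k
  · obtain ⟨k, rfl⟩ := h
    have hk : k < n := (pow_lt_pow_iff_right₀ (by norm_num : (1:ℤ) < 2)).mp hi
    rw [phi_coeff_pow, phi_coeff_pow, hg k hk, sub_self]
  · rw [phi_coeff_not_pow 𝔽 g _ h, phi_coeff_not_pow 𝔽 f _ h, sub_self]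

lemma Hset_compact : IsCompact (Hset 𝔽) := by
  letI : TopologicalSpace 𝔽 := ⊥
  haveI : DiscreteTopology 𝔽 := ⟨rfl⟩
  rw [← phi_range]
  exact isCompact_range (phi_continuous 𝔽)

lemma single_mem_Hset (k : ℕ) : (HahnSeries.single ((2:ℤ)^k) (1:𝔽)) ∈ Hset 𝔽 := by
  intro j hj
  rw [HahnSeries.coeff_single] at hj
  by_cases h : j = 2 ^ k
  · exact ⟨k, h⟩
  · simp [h] at hj

lemma Hset_infinite : (Hset 𝔽).Infinite := by
  refine Set.infinite_of_injective_forall_mem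
    (f := fun k : ℕ => (HahnSeries.single ((2:ℤ)^k) (1:𝔽) : LaurentSeries 𝔽))
    ?_ (single_mem_Hset 𝔽)
  intro m n h
  have hc := congrArg (fun z : LaurentSeries 𝔽 => z.coeff ((2:ℤ)^m)) h
  simp only [HahnSeries.coeff_single, if_pos rfl] at hc
  by_cases he : ((2:ℤ)^m = 2^n)
  · exact pow2_injZ he
  · rw [if_neg he] at hc
    exact absurd hc one_ne_zero

lemma Hset_interior : interior (Hset 𝔽) = (∅ : Set (LaurentSeries 𝔽)) := by
  rw [Set.eq_empty_iff_forall_notMem]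
  intro x hx
  have hxH : x ∈ Hset 𝔽 := interior_subset hx
  have hnb : Hset 𝔽 ∈ nhds x := mem_interior_iff_mem_nhds.mp hx
  obtain ⟨γ, hγ⟩ := mem_nhds_old 𝔽 hnb
  obtain ⟨a, ha⟩ := WithZero.ne_zero_iff_exists.mp γ.ne_zero
  set m : ℕ := (toAdd a).natAbs with hm
  set j : ℤ := 3 * 2 ^ m with hj
  have hjnp : ¬∃ k : ℕ, j = 2 ^ k := by
    rintro ⟨k, hk⟩
    have h3 : (3 : ℤ) ∣ 2 ^ k := ⟨2 ^ m, hk.symm⟩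
    have := (Int.prime_three).dvd_of_dvd_pow h3
    norm_num at this
  have hy : x + HahnSeries.single j (1:𝔽) ∈ Hset 𝔽 := by
    apply hγ
    show Valued.v (x + HahnSeries.single j (1:𝔽) - x) < (γ : (WithZero (Multiplicative ℤ)))
    rw [add_sub_cancel_left, valuation_single_zpow, ← ha]
    rw [show WithZero.exp (-j) = ((ofAdd (-j) : Multiplicative ℤ) : WithZero (Multiplicative ℤ))
      from rfl, WithZero.coe_lt_coe,
      ← ofAdd_toAdd a, Multiplicative.ofAdd_lt]
    have h1 : ((m : ℤ)) < 2 ^ m := by exact_mod_cast (Nat.lt_two_pow_self (n := m))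
    have h2 : -((m : ℤ)) ≤ toAdd a := by rw [hm]; omega
    rw [hj]; push_cast; nlinarith [pow_pos (by norm_num : (0:ℤ) < 2) m]
  apply hjnp
  apply hy j
  rw [HahnSeries.coeff_add, HahnSeries.coeff_single, if_pos rfl]
  have hx0 : x.coeff j = 0 := by
    by_contra hc
    exact hjnp (hxH j hc)
  rw [hx0, zero_add]
  exact one_ne_zero

/-- `H` is a subgroup of `(K,+)` which is compact, closed in `K`, not
discrete, and has empty interior in `K` (in particular, `H` is not open). -/
theorem Hset_subgroup_compact_closed_nondiscrete_emptyInterior :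
    ((0 : LaurentSeries 𝔽) ∈ Hset 𝔽 ∧
      (∀ x ∈ Hset 𝔽, ∀ y ∈ Hset 𝔽, x + y ∈ Hset 𝔽) ∧
      (∀ x ∈ Hset 𝔽, -x ∈ Hset 𝔽)) ∧
    IsCompact (Hset 𝔽) ∧
    IsClosed (Hset 𝔽) ∧
    ¬ DiscreteTopology (Hset 𝔽) ∧
    interior (Hset 𝔽) = (∅ : Set (LaurentSeries 𝔽)) ∧
    ¬ IsOpen (Hset 𝔽) := by
  have hcomp := Hset_compact 𝔽
  have hint := Hset_interior 𝔽
  have h0 : (0 : LaurentSeries 𝔽) ∈ Hset 𝔽 := by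
    intro j hj; simp at hj
  refine ⟨⟨h0, ?_, ?_⟩, hcomp, hcomp.isClosed, ?_, hint, ?_⟩
  · intro x hx y hy j hj
    rw [HahnSeries.coeff_add] at hj
    by_cases hxj : x.coeff j = 0
    · exact hy j (by rw [hxj, zero_add] at hj; exact hj)
    · exact hx j hxj
  · intro x hx j hj
    rw [HahnSeries.coeff_neg, neg_ne_zero] at hj
    exact hx j hj
  · intro hd
    exact (Hset_infinite 𝔽) (hcomp.finite (isDiscrete_iff_discreteTopology.mpr hd))
  · intro hO
    rw [hO.interior_eq] at hint
    rw [hint] at h0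
    exact h0
end
end

section
/- Let f : B_ε(0) → K^m be given by a pointwise convergent series f(y) = ∑_{k=0}^∞ p_k(y), where each p_k : K^n → K^m is a homogeneous polynomial map of degree k. If for every y ∈ B_ε(0) the one-variable function D → K^m, z ↦ f(zy) (where D := {z ∈ K : |z| < 1}) is constant on some neighbourhood of 0 in K, then f is constant on B_ε(0), equal to p_0. -/
/- CONTEXT: `K` is a field complete with respect to a nontrivial non-archimedean absolute
value (`NontriviallyNormedField K`, `IsUltrametricDist K`, `CompleteSpace K`).  Fix
`n, m ∈ ℕ`, a norm `‖·‖ = nrm` on `K^n = Fin n → K` (an arbitrary norm, given by its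
axioms), and `ε > 0`; `B_ε(0) = {y : nrm y < ε}`.  `D = {z ∈ K : ‖z‖ < 1}` is the open
unit disk of `K`.  The homogeneous polynomial maps `p_k : K^n → K^m` of degree `k` are
given componentwise by homogeneous multivariate polynomials `P k j` of degree `k`, and
`f(y) = ∑_{k=0}^∞ p_k(y)` pointwise (limit of the partial sums). -/

open Filter Topology

/-- Evaluation of a homogeneous polynomial at a scalar multiple. -/
lemma eval_smul_of_isHomogeneous {σ R : Type*} [CommSemiring R] {φ : MvPolynomial σ R}
    {k : ℕ} (h : φ.IsHomogeneous k) (c : R) (x : σ → R) :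
    MvPolynomial.eval (c • x) φ = c ^ k * MvPolynomial.eval x φ := by
  rw [MvPolynomial.eval_eq, MvPolynomial.eval_eq, Finset.mul_sum]
  refine Finset.sum_congr rfl fun d hd => ?_
  have hdeg : d.degree = k := by
    rw [Finsupp.degree_eq_weight_one]; exact h (MvPolynomial.mem_support_iff.mp hd)
  have h1 : ∀ i ∈ d.support, (c • x) i ^ d i = c ^ d i * x i ^ d i := by
    intro i _; simp [mul_pow]
  rw [Finset.prod_congr rfl h1, Finset.prod_mul_distrib, Finset.prod_pow_eq_pow_sum]
  have : ∑ i ∈ d.support, d i = k := by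
    simpa [Finsupp.degree_apply] using hdeg
  rw [this]; ring

/-- if `f(y) = ∑_{k=0}^∞ p_k(y)` converges pointwise on `B_ε(0)` with `p_k`
homogeneous of degree `k`, and if for each `y ∈ B_ε(0)` the one-variable map
`D → K^m, z ↦ f(zy)` is constant on some neighbourhood of `0` in `K`, then `f` is
constant on `B_ε(0)`, equal to `p_0`. -/
theorem sum_of_homogeneous_locally_constant_on_lines_is_constant
    {K : Type*} [NontriviallyNormedField K] [IsUltrametricDist K] [CompleteSpace K]
    (n m : ℕ) (nrm : (Fin n → K) → ℝ)
    (nrm_eq_zero : ∀ y, nrm y = 0 ↔ y = 0)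
    (nrm_add : ∀ y₁ y₂, nrm (y₁ + y₂) ≤ nrm y₁ + nrm y₂)
    (nrm_smul : ∀ (c : K) (y), nrm (c • y) = ‖c‖ * nrm y)
    (ε : ℝ) (hε : 0 < ε)
    (f : (Fin n → K) → (Fin m → K))
    (P : ℕ → Fin m → MvPolynomial (Fin n) K)
    (hhom : ∀ k j, (P k j).IsHomogeneous k)
    (hconv : ∀ y, nrm y < ε → ∀ j : Fin m,
      Tendsto (fun N => ∑ k ∈ Finset.range N, MvPolynomial.eval y (P k j))
        atTop (𝓝 (f y j)))
    (hline : ∀ y, nrm y < ε → ∃ t ∈ 𝓝 (0 : K), ∀ z ∈ t, ‖z‖ < 1 →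
      f (z • y) = f ((0 : K) • y)) :
    ∀ y, nrm y < ε → ∀ j : Fin m, f y j = MvPolynomial.eval y (P 0 j) := by
  intro y hy j
  set a : ℕ → K := fun k => MvPolynomial.eval y (P k j) with ha
  -- nonnegativity of nrm
  have nrm_nonneg : ∀ v, 0 ≤ nrm v := by
    intro v
    have h1 : nrm ((-1 : K) • v) = nrm v := by rw [nrm_smul]; simp
    have h2 := nrm_add v ((-1 : K) • v)
    have h3 : v + (-1 : K) • v = 0 := by simp
    have h4 : nrm (0 : Fin n → K) = 0 := (nrm_eq_zero 0).mpr rfl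
    rw [h3, h4, h1] at h2
    linarith
  -- convergence of the one-variable power series
  have hzconv : ∀ z : K, ‖z‖ ≤ 1 →
      Tendsto (fun N => ∑ k ∈ Finset.range N, z ^ k * a k) atTop (𝓝 (f (z • y) j)) := by
    intro z hz
    have hyz : nrm (z • y) < ε := by
      rw [nrm_smul]
      calc ‖z‖ * nrm y ≤ 1 * nrm y := mul_le_mul_of_nonneg_right hz (nrm_nonneg y)
        _ = nrm y := one_mul _
        _ < ε := hy
    have := hconv (z • y) hyz j
    refine this.congr fun N => Finset.sum_congr rfl fun k _ => ?_
    rw [eval_smul_of_isHomogeneous (hhom k j)]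
  -- the coefficients tend to zero
  have hS : Tendsto (fun N => ∑ k ∈ Finset.range N, a k) atTop (𝓝 (f ((1 : K) • y) j)) := by
    have := hzconv 1 (by simp)
    simpa using this
  have h0 : Tendsto a atTop (𝓝 (0 : K)) := by
    have h1 := (hS.comp (tendsto_add_atTop_nat 1)).sub hS
    rw [sub_self] at h1
    refine h1.congr fun N => ?_
    simp [Finset.sum_range_succ]
  -- HasSum for each ‖z‖ ≤ 1
  have hHasSum : ∀ z : K, ‖z‖ ≤ 1 → HasSum (fun k => z ^ k * a k) (f (z • y) j) := by
    intro z hz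
    have hsummable : Summable (fun k => z ^ k * a k) := by
      apply NonarchimedeanAddGroup.summable_of_tendsto_cofinite_zero
      rw [Nat.cofinite_eq_atTop]
      rw [tendsto_zero_iff_norm_tendsto_zero] at h0 ⊢
      refine squeeze_zero (fun k => norm_nonneg _) (fun k => ?_) h0
      rw [norm_mul]
      calc ‖z ^ k‖ * ‖a k‖ ≤ 1 * ‖a k‖ := by
            apply mul_le_mul_of_nonneg_right _ (norm_nonneg _)
            rw [norm_pow]; exact pow_le_one₀ (norm_nonneg z) hz
        _ = ‖a k‖ := one_mul _
    have hhs := hsummable.hasSum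
    rwa [tendsto_nhds_unique hhs.tendsto_sum_nat (hzconv z hz)] at hhs
  -- power series structure
  set q : FormalMultilinearSeries K K K := FormalMultilinearSeries.ofScalars K a with hq
  have hball : HasFPowerSeriesOnBall (fun z : K => f (z • y) j) q 0 1 := by
    constructor
    · -- 1 ≤ q.radius
      obtain ⟨C, hC⟩ : ∃ C : ℝ, ∀ k, ‖a k‖ ≤ C := by
        obtain ⟨C, hC⟩ := h0.norm.bddAbove_range
        exact ⟨C, fun k => hC ⟨k, rfl⟩⟩
      apply FormalMultilinearSeries.le_radius_of_bound _ C
      intro k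
      simp only [NNReal.coe_one, one_pow, mul_one]
      calc ‖q k‖ = ‖a k • ContinuousMultilinearMap.mkPiAlgebraFin K k K‖ := rfl
        _ ≤ ‖a k‖ * ‖ContinuousMultilinearMap.mkPiAlgebraFin K k K‖ := ContinuousMultilinearMap.opNorm_smul_le _ _
        _ = ‖a k‖ * 1 := by rw [ContinuousMultilinearMap.norm_mkPiAlgebraFin]
        _ ≤ C := by rw [mul_one]; exact hC k
    · exact one_pos
    · intro z hz
      rw [EMetric.mem_ball, edist_zero_right] at hz
      have hz1 : ‖z‖₊ < 1 := by rw [enorm_eq_nnnorm] at hz; exact_mod_cast hz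
      have hz' : ‖z‖ ≤ 1 := by exact_mod_cast hz1.le
      have hfun : (fun k => q k fun _ => z) = fun k => z ^ k * a k := by
        funext k
        rw [hq, FormalMultilinearSeries.ofScalars_apply_eq, smul_eq_mul, mul_comm]
      simp only [zero_add]
      rw [hfun]
      exact hHasSum z hz'
  -- identify the series with the constant series
  obtain ⟨t, ht, hconst⟩ := hline y hy
  have heq : (fun z : K => f (z • y) j) =ᶠ[𝓝 (0 : K)] (fun _ => f ((0 : K) • y) j) := by
    filter_upwards [ht, Metric.ball_mem_nhds (0 : K) one_pos] with z hz1 hz2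
    rw [hconst z hz1 (by simpa using hz2)]
  have hq_const : HasFPowerSeriesAt (fun _ : K => f ((0 : K) • y) j) q 0 :=
    hball.hasFPowerSeriesAt.congr heq
  have hqeq : q = constFormalMultilinearSeries K K (f ((0 : K) • y) j) :=
    hq_const.eq_formalMultilinearSeries hasFPowerSeriesAt_const
  -- coefficients of positive degree vanish
  have hak : ∀ k, k ≠ 0 → a k = 0 := by
    intro k hk
    have h1 := congrFun hqeq k
    have h2 := congrArg (fun Q : ContinuousMultilinearMap K (fun _ : Fin k => K) K =>
      Q fun _ => (1 : K)) h1
    simp only [hq, FormalMultilinearSeries.ofScalars_apply_eq,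
      constFormalMultilinearSeries_apply_of_nonzero hk, one_pow, smul_eq_mul, mul_one,
      ContinuousMultilinearMap.zero_apply] at h2
    exact h2
  -- conclude
  have hfinal : Tendsto (fun N => ∑ k ∈ Finset.range N, a k) atTop (𝓝 (a 0)) := by
    refine Tendsto.congr' ?_ tendsto_const_nhds
    filter_upwards [eventually_ge_atTop 1] with N hN
    rw [Finset.sum_eq_single 0]
    · intro k hk hk0; exact hak k hk0
    · intro h; exact absurd (Finset.mem_range.mpr hN) h
  have := tendsto_nhds_unique hS hfinal
  rw [one_smul] at this
  exact this
end

section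
/- Let U ⊆ K be open, f : U → K be K-analytic, and N ⊆ K be a set with empty interior such that f(U) ⊆ N. Then the derivative f′(z) vanishes for every z ∈ U. (Equivalently: if f is analytic at z₀ with f′(z₀) ≠ 0, then f(U) is a neighbourhood of f(z₀).) -/
/- CONTEXT: `K` is a field complete with respect to a nontrivial absolute value
(`NontriviallyNormedField K`, `CompleteSpace K`).  A function `f : U → K` on an open set
`U ⊆ K` is `K`-analytic if it is locally given by convergent power series, which is
Mathlib's `AnalyticOnNhd K f U`; `f′` is the derivative `deriv f`. -/

/-- if `U ⊆ K` is open, `f : U → K` is `K`-analytic, and `N ⊆ K` has empty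
interior with `f(U) ⊆ N`, then `f′(z) = 0` for every `z ∈ U`. -/
theorem deriv_eq_zero_of_analytic_into_emptyInterior
    {K : Type*} [NontriviallyNormedField K] [CompleteSpace K]
    (U N : Set K) (hU : IsOpen U) (f : K → K)
    (hf : AnalyticOnNhd K f U)
    (hN : interior N = ∅)
    (hfN : Set.MapsTo f U N) :
    ∀ z ∈ U, deriv f z = 0 := by
  intro z hz
  by_contra h0
  have hsd : HasStrictDerivAt f (deriv f z) z :=
    ((hf z hz).hasStrictFDerivAt).hasStrictDerivAt
  have hmap : Filter.map f (nhds z) = nhds (f z) := hsd.map_nhds_eq h0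
  have hNmem : N ∈ nhds (f z) := by
    rw [← hmap, Filter.mem_map]
    exact Filter.mem_of_superset (hU.mem_nhds hz) hfN
  have : f z ∈ interior N := mem_interior_iff_mem_nhds.2 hNmem
  simp [hN] at this
end

section
/- Let f(z) = ∑_{k=1}^∞ a_k z^k be a power series with coefficients a_k ∈ K satisfying |a_k| ≤ 1 for all k ∈ ℕ, which converges pointwise on D := {z ∈ K : |z| < 1}. If f(z) ∈ H for every z ∈ D, then a_k = 0 for all k ∈ ℕ, i.e. f is identically zero. -/
/- CONTEXT: `𝔽` a finite field of order `q`, `K = 𝔽((X))` (realized as `LaurentSeries 𝔽`)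
with its X-adic absolute value `vabs` (`|X| = q⁻¹`) and valuation topology.
`D = {z : |z| < 1}` and `H := {∑_{k=0}^∞ a_k X^{2^k} : (a_k) ∈ 𝔽^ℕ}` is the set of
Laurent series supported on `{2^k : k ∈ ℕ}`.  The power series `f(z) = ∑_{k=1}^∞ a_k z^k`
converges pointwise on `D` as the limit of its partial sums. -/

noncomputable section

open Filter Topology

variable (𝔽 : Type) [Field 𝔽] [Fintype 𝔽]

lemma card_gt_one : (1 : ℝ) < (Fintype.card 𝔽 : ℝ) := by
  exact_mod_cast Fintype.one_lt_card

/-- Coefficients at negative indices vanish for series with `|z| ≤ 1`. -/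
lemma coeff_neg_eq_zero {z : LaurentSeries 𝔽} (h : vabs 𝔽 z ≤ 1) {j : ℤ} (hj : j < 0) :
    z.coeff j = 0 := by
  by_cases hz : z = 0
  · simp [hz]
  · have horder : 0 ≤ z.order := by
      by_contra hlt
      push_neg at hlt
      have h1 : (1 : ℝ) < (Fintype.card 𝔽 : ℝ) ^ (-z.order) :=
        one_lt_zpow₀ (card_gt_one 𝔽) (by omega)
      rw [vabs, if_neg hz] at h
      linarith
    exact HahnSeries.coeff_eq_zero_of_lt_order (lt_of_lt_of_le hj horder)

omit [Fintype 𝔽] in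
lemma finset_sum_coeff {ι : Type*} (s : Finset ι) (f : ι → LaurentSeries 𝔽) (g : ℤ) :
    (∑ i ∈ s, f i).coeff g = ∑ i ∈ s, (f i).coeff g := by
  classical
  induction s using Finset.cons_induction with
  | empty => simp
  | cons i s hi ih => simp [Finset.sum_insert hi, HahnSeries.coeff_add, ih]

/-- Key contradiction lemma: a minimal nonzero coefficient is impossible. -/
lemma key_lemma (a : ℕ → LaurentSeries 𝔽)
    (hbd : ∀ k : ℕ, 1 ≤ k → vabs 𝔽 (a k) ≤ 1)
    (hconv : ∀ z : LaurentSeries 𝔽, vabs 𝔽 z < 1 → ∃ s : LaurentSeries 𝔽,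
      Tendsto (fun N => ∑ k ∈ Finset.Icc 1 N, a k * z ^ k) atTop (𝓝 s) ∧
      s ∈ Hset 𝔽)
    (k₀ : ℕ) (hk₀ : 1 ≤ k₀) (hmin : ∀ l, 1 ≤ l → l < k₀ → a l = 0)
    (hne : a k₀ ≠ 0) : False := by
  set d : ℤ := (a k₀).order with hd
  have hd0 : 0 ≤ d := by
    by_contra hlt
    push_neg at hlt
    exact (HahnSeries.coeff_order_eq_zero.not.mpr hne) (coeff_neg_eq_zero 𝔽 (hbd k₀ hk₀) hlt)
  -- main step: for every m ≥ 2 with d < m, d + m * k₀ is a power of 2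
  have main : ∀ m : ℕ, 2 ≤ m → d < (m : ℤ) → ∃ e : ℕ, d + (m : ℤ) * k₀ = 2 ^ e := by
    intro m hm2 hdm
    set z : LaurentSeries 𝔽 := HahnSeries.single (m : ℤ) (1 : 𝔽) with hz
    have hzne : z ≠ 0 := HahnSeries.single_ne_zero one_ne_zero
    have hzord : z.order = (m : ℤ) := HahnSeries.order_single one_ne_zero
    have hzabs : vabs 𝔽 z < 1 := by
      rw [vabs, if_neg hzne, hzord]
      calc (Fintype.card 𝔽 : ℝ) ^ (-(m : ℤ)) < (Fintype.card 𝔽 : ℝ) ^ (0 : ℤ) := by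
            apply zpow_lt_zpow_right₀ (card_gt_one 𝔽); omega
        _ = 1 := zpow_zero _
    obtain ⟨s, hs, hH⟩ := hconv z hzabs
    set j : ℤ := d + (m : ℤ) * k₀ with hj
    -- coefficient of partial sums at j
    have hterm : ∀ k : ℕ, (a k * z ^ k).coeff j = (a k).coeff (j - (k : ℤ) * m) := by
      intro k
      have : z ^ k = HahnSeries.single ((k : ℤ) * m) (1 : 𝔽) := by
        rw [hz, HahnSeries.single_pow, one_pow, nsmul_eq_mul]
      rw [this]
      have hjj : j = (j - (k : ℤ) * m) + (k : ℤ) * m := by ring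
      rw [hjj, HahnSeries.coeff_mul_single_add, mul_one]
      congr 1
      ring
    have hpartial : ∀ N : ℕ, k₀ ≤ N →
        (∑ k ∈ Finset.Icc 1 N, a k * z ^ k).coeff j = (a k₀).coeff d := by
      intro N hN
      rw [finset_sum_coeff]
      rw [Finset.sum_eq_single k₀]
      · rw [hterm]
        congr 1
        push_cast [hj]
        ring
      · intro k hk hkne
        simp only [Finset.mem_Icc] at hk
        rw [hterm]
        rcases lt_or_gt_of_ne hkne with hlt | hgt
        · rw [hmin k hk.1 hlt, HahnSeries.coeff_zero]
        · apply coeff_neg_eq_zero 𝔽 (hbd k hk.1)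
          have : (k₀ : ℤ) + 1 ≤ (k : ℤ) := by exact_mod_cast hgt
          have hm : (1 : ℤ) ≤ m := by exact_mod_cast le_trans (by norm_num) hm2
          have hk₀1 : (1 : ℤ) ≤ (k₀ : ℤ) := by exact_mod_cast hk₀
          rw [hj]
          nlinarith
      · intro h
        exact absurd (Finset.mem_Icc.mpr ⟨hk₀, hN⟩) h
    -- the limit has the same coefficient at j
    have hscoeff : s.coeff j = (a k₀).coeff d := by
      set γ : (WithZero (Multiplicative ℤ))ˣ := Units.mk0 ((Multiplicative.ofAdd (-(j + 1)) : Multiplicative ℤ) : WithZero (Multiplicative ℤ))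
        (WithZero.coe_ne_zero) with hγ
      have hmem : {y : LaurentSeries 𝔽 | Valued.v (y - s) < (γ : WithZero (Multiplicative ℤ))} ∈ 𝓝 s :=
        by
          have hU : {P : LaurentSeries 𝔽 × LaurentSeries 𝔽 | Valued.v (P.snd - P.fst) < (γ : WithZero (Multiplicative ℤ))} ∈ uniformity (LaurentSeries 𝔽) := by
            obtain ⟨x, hx⟩ := LaurentSeries.valuation_surjective 𝔽 γ
            have : Valued.v.restrict x ≠ 0 := fun h ↦ NeZero.ne γ.1 <|
              hx ▸ MonoidWithZeroHom.ValueGroup₀.restrict₀_eq_zero_iff.1 h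
            rw [← hx]
            nth_rw 2 [← Valuation.coe_ofClass]
            rw [← MonoidWithZeroHom.ValueGroup₀.embedding_restrict₀]
            simp_rw [← Valued.v.restrict_lt_iff_lt_embedding]
            exact (Valued.hasBasis_uniformity (LaurentSeries 𝔽) (WithZero (Multiplicative ℤ))).mem_of_mem
              (i := Units.mk0 (Valued.v.restrict x) this) (by tauto)
          exact mem_nhds_left s hU
      have hev : ∀ᶠ N in atTop,
          Valued.v ((∑ k ∈ Finset.Icc 1 N, a k * z ^ k) - s) < (γ : WithZero (Multiplicative ℤ)) := hs hmem
      obtain ⟨N, hN1, hN2⟩ := (hev.and (eventually_ge_atTop k₀)).exists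
      have hle : Valued.v ((∑ k ∈ Finset.Icc 1 N, a k * z ^ k) - s)
          ≤ ((Multiplicative.ofAdd (-(j + 1)) : Multiplicative ℤ) : WithZero (Multiplicative ℤ)) := le_of_lt hN1
      have := LaurentSeries.eq_coeff_of_valuation_sub_lt 𝔽 hle (n := j) (by omega)
      rw [← this, hpartial N hN2]
    have hne' : s.coeff j ≠ 0 := by
      rw [hscoeff]; exact HahnSeries.coeff_order_eq_zero.not.mpr hne
    exact hH j hne'
  -- now derive the arithmetic contradiction
  set M : ℕ := d.toNat + 2 with hM
  have hdM : d < (M : ℤ) := by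
    have := Int.toNat_of_nonneg hd0
    omega
  obtain ⟨e₁, he₁⟩ := main M (by omega) hdM
  obtain ⟨e₂, he₂⟩ := main (M + 1) (by omega) (by push_cast; omega)
  have hk₀pos : (0 : ℤ) < (k₀ : ℤ) := by exact_mod_cast hk₀
  have hdiff : (2 : ℤ) ^ e₂ = 2 ^ e₁ + k₀ := by
    rw [← he₁, ← he₂]; push_cast; ring
  have hlt : (2 : ℤ) ^ e₁ < 2 ^ e₂ := by omega
  have hee : e₁ < e₂ := by
    by_contra h
    push_neg at h
    exact absurd (pow_le_pow_right₀ (by norm_num : (1:ℤ) ≤ 2) h) (not_le.mpr hlt)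
  have hdvd : (2 : ℤ) ^ e₁ ∣ (k₀ : ℤ) := by
    have h1 : (2 : ℤ) ^ e₁ ∣ 2 ^ e₂ - 2 ^ e₁ := dvd_sub (pow_dvd_pow 2 (le_of_lt hee)) dvd_rfl
    have heq : (2 : ℤ) ^ e₂ - 2 ^ e₁ = (k₀ : ℤ) := by omega
    rwa [heq] at h1
  have hle : (2 : ℤ) ^ e₁ ≤ (k₀ : ℤ) := Int.le_of_dvd hk₀pos hdvd
  have hMge : (2 : ℤ) ≤ (M : ℤ) := by exact_mod_cast (by omega : 2 ≤ M)
  nlinarith [he₁]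

/-- let `f(z) = ∑_{k=1}^∞ a_k z^k` be a power series with coefficients
`a_k ∈ K`, `|a_k| ≤ 1`, converging pointwise on `D`.  If `f(z) ∈ H` for every `z ∈ D`,
then `a_k = 0` for all `k ∈ ℕ` (`k ≥ 1`), i.e. `f` is identically zero. -/
theorem coeffs_vanish_of_bounded_series_into_H
    (a : ℕ → LaurentSeries 𝔽)
    (hbd : ∀ k : ℕ, 1 ≤ k → vabs 𝔽 (a k) ≤ 1)
    (hconv : ∀ z : LaurentSeries 𝔽, vabs 𝔽 z < 1 → ∃ s : LaurentSeries 𝔽,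
      Tendsto (fun N => ∑ k ∈ Finset.Icc 1 N, a k * z ^ k) atTop (𝓝 s) ∧
      s ∈ Hset 𝔽) :
    ∀ k : ℕ, 1 ≤ k → a k = 0 := by
  by_contra h
  push_neg at h
  obtain ⟨k, hk1, hkne⟩ := h
  classical
  have hex : ∃ k : ℕ, 1 ≤ k ∧ a k ≠ 0 := ⟨k, hk1, hkne⟩
  let k₀ := Nat.find hex
  obtain ⟨hk₀1, hk₀ne⟩ := Nat.find_spec hex
  refine key_lemma 𝔽 a hbd hconv k₀ hk₀1 (fun l hl1 hlk => ?_) hk₀ne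
  by_contra hlne
  exact absurd hlk (not_lt.mpr (Nat.find_le ⟨hl1, hlne⟩))
end
end
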